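/- arXiv:1604.00486 — 5 statements merged into one kernel-verified Lean document; each statement's English description precedes it below -/
import Mathlib

section
/- The Gray map φ : R₂ⁿ → F₂^{4n} is orthogonality-preserving: if x, y ∈ R₂ⁿ satisfy ⟨x, y⟩ = 0 in R₂ (standard inner product), then ⟨φ(x), φ(y)⟩ = 0 in F₂. -/
set_option synthInstance.maxHeartbeats 1000000
set_option maxHeartbeats 1000000

/-- The ring `R₂ = F₂[u,v]/(u², v²)`, realized as dual numbers over
dual numbers over `F₂`: every element is uniquely `a + ub + vc + uvd`. -/
abbrev R2 : Type := DualNumber (DualNumber (ZMod 2))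

/-- The element `u` of `R₂`. -/
noncomputable def uR2 : R2 := TrivSqZeroExt.inl DualNumber.eps

/-- The element `v` of `R₂`. -/
noncomputable def vR2 : R2 := DualNumber.eps

/-- The element `a + ub + vc + uvd` of `R₂`. -/
noncomputable def rep (a b c d : ZMod 2) : R2 :=
  algebraMap (ZMod 2) R2 a + uR2 * algebraMap (ZMod 2) R2 b +
    vR2 * algebraMap (ZMod 2) R2 c + uR2 * vR2 * algebraMap (ZMod 2) R2 d

/-- The coordinates of the Gray image of a single element
`x = a + ub + vc + uvd` of `R₂`: `(d, c+d, b+d, a+b+c+d)`. -/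
def grayCoord (x : R2) : Fin 4 → ZMod 2 :=
  ![x.snd.snd, x.snd.fst + x.snd.snd, x.fst.snd + x.snd.snd,
    x.fst.fst + x.fst.snd + x.snd.fst + x.snd.snd]

/-- The Gray map `φ : R₂ⁿ → F₂^{4n}`, the four blocks of the image being
indexed by `Fin 4`. -/
def grayMap {n : ℕ} (x : Fin n → R2) : Fin 4 × Fin n → ZMod 2 :=
  fun p => grayCoord (x p.2) p.1


def fR2 : R2 →+ ZMod 2 where
  toFun z := z.fst.fst + z.fst.snd + z.snd.fst + z.snd.snd
  map_zero' := by simp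
  map_add' z w := by simp [TrivSqZeroExt.fst_add, TrivSqZeroExt.snd_add, TrivSqZeroExt.fst_smul, TrivSqZeroExt.snd_smul,
    smul_eq_mul, op_smul_eq_mul]; ring

lemma aux8 : ∀ a b c d a' b' c' d' : ZMod 2,
    d * d' + (c + d) * (c' + d') + (b + d) * (b' + d') +
      (a + b + c + d) * (a' + b' + c' + d') =
    a * a' + (a * b' + b * a') + (a * c' + c * a') +
      (a * d' + b * c' + c * b' + d * a') := by decide

lemma gray_key (z w : R2) :
    ∑ k : Fin 4, grayCoord z k * grayCoord w k = fR2 (z * w) := by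
  simp only [grayCoord, Fin.sum_univ_four, Matrix.cons_val_zero, Matrix.cons_val_one,
    Matrix.head_cons, Matrix.cons_val_two, Matrix.tail_cons, Matrix.cons_val_three, fR2,
    AddMonoidHom.coe_mk, ZeroHom.coe_mk, TrivSqZeroExt.fst_mul, TrivSqZeroExt.snd_mul,
    TrivSqZeroExt.fst_add, TrivSqZeroExt.snd_add, TrivSqZeroExt.fst_smul, TrivSqZeroExt.snd_smul,
    smul_eq_mul, op_smul_eq_mul]
  have := aux8 z.fst.fst z.fst.snd z.snd.fst z.snd.snd w.fst.fst w.fst.snd w.snd.fst w.snd.snd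
  rw [this]
  ring

/-- The Gray map is orthogonality-preserving: if `⟨x,y⟩ = 0` in `R₂`
then `⟨φ(x), φ(y)⟩ = 0` in `F₂`. -/
theorem grayMap_orthogonality {n : ℕ} (x y : Fin n → R2)
    (h : ∑ i, x i * y i = 0) :
    ∑ p : Fin 4 × Fin n, grayMap x p * grayMap y p = 0 := by
  calc ∑ p : Fin 4 × Fin n, grayMap x p * grayMap y p
      = ∑ j : Fin n, ∑ k : Fin 4, grayCoord (x j) k * grayCoord (y j) k := by
        rw [Fintype.sum_prod_type]
        exact Finset.sum_comm
    _ = ∑ j : Fin n, fR2 (x j * y j) := by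
        exact Finset.sum_congr rfl fun j _ => gray_key (x j) (y j)
    _ = fR2 (∑ i, x i * y i) := (map_sum fR2 _ _).symm
    _ = 0 := by rw [h]; simp
end

section
/- If C is a self-dual code of length n over R₂, then its Gray image φ(C) is a binary self-dual code of length 4n. -/
set_option synthInstance.maxHeartbeats 1000000
set_option maxHeartbeats 1000000
set_option maxRecDepth 4000

/-- The dual of a set of vectors with entries in a commutative ring,
with respect to the standard inner product. -/
def dualSetR (R : Type*) [CommRing R] {ι : Type*} [Fintype ι]
    (C : Set (ι → R)) : Set (ι → R) :=
  {y | ∀ x ∈ C, ∑ i, x i * y i = 0}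

/-- The additive "total trace" functional `T(a + ub + vc + uvd) = a+b+c+d`,
a generating character for the Frobenius ring `R₂`. -/
def Tf : R2 →+ ZMod 2 where
  toFun z := z.fst.fst + z.fst.snd + z.snd.fst + z.snd.snd
  map_zero' := by simp
  map_add' x y := by
    simp only [TrivSqZeroExt.fst_add, TrivSqZeroExt.snd_add]; ring

/-- Pointwise: the Gray inner product of two elements equals `T` of their product. -/
lemma gray_inner (x y : R2) :
    ∑ i : Fin 4, grayCoord x i * grayCoord y i = Tf (x * y) := by
  obtain ⟨⟨a,b⟩,⟨c,d⟩⟩ := x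
  obtain ⟨⟨a',b'⟩,⟨c',d'⟩⟩ := y
  simp only [Tf, grayCoord, Fin.sum_univ_four, Matrix.cons_val_zero, Matrix.cons_val_one,
    Matrix.head_cons, Matrix.cons_val_two, Matrix.tail_cons, Matrix.cons_val_three,
    TrivSqZeroExt.fst_mul, TrivSqZeroExt.snd_mul, TrivSqZeroExt.fst_add, TrivSqZeroExt.snd_add,
    smul_eq_mul, MulOpposite.smul_eq_mul_unop, MulOpposite.unop_op, AddMonoidHom.coe_mk,
    ZeroHom.coe_mk]
  revert a b c d a' b' c' d'
  decide

/-- `T` is nondegenerate: if `T` vanishes on `z, uz, vz, uvz`, then `z = 0`. -/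
lemma nondeg (z : R2) (h1 : Tf z = 0) (hu : Tf (uR2 * z) = 0)
    (hv : Tf (vR2 * z) = 0) (huv : Tf (uR2 * (vR2 * z)) = 0) : z = 0 := by
  obtain ⟨⟨a,b⟩,⟨c,d⟩⟩ := z
  simp only [Tf, uR2, vR2, DualNumber.eps,
    TrivSqZeroExt.fst_mul, TrivSqZeroExt.snd_mul, TrivSqZeroExt.fst_inl, TrivSqZeroExt.snd_inl,
    TrivSqZeroExt.fst_inr, TrivSqZeroExt.snd_inr, TrivSqZeroExt.fst_mk, TrivSqZeroExt.snd_mk,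
    TrivSqZeroExt.fst_add, TrivSqZeroExt.snd_add, TrivSqZeroExt.fst_zero, TrivSqZeroExt.snd_zero,
    smul_eq_mul, MulOpposite.smul_eq_mul_unop, MulOpposite.unop_op, AddMonoidHom.coe_mk,
    ZeroHom.coe_mk, zero_mul, mul_zero, one_mul, mul_one, zero_add, add_zero] at h1 hu hv huv
  obtain ⟨rfl, rfl, rfl, rfl⟩ : a = 0 ∧ b = 0 ∧ c = 0 ∧ d = 0 := by
    revert h1 hu hv huv; revert a b c d; decide
  rfl

/-- The inverse of the Gray map on a single coordinate block. -/
def invCoord (f : Fin 4 → ZMod 2) : R2 :=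
  ⟨⟨f 3 + f 2 + f 1 + f 0, f 2 + f 0⟩, ⟨f 1 + f 0, f 0⟩⟩

lemma grayCoord_invCoord (f : Fin 4 → ZMod 2) : grayCoord (invCoord f) = f := by
  have h : ∀ a b c d : ZMod 2, grayCoord (invCoord ![a,b,c,d]) = ![a,b,c,d] := by decide
  have hf : f = ![f 0, f 1, f 2, f 3] := by
    funext i; fin_cases i <;> rfl
  rw [hf, h]

/-- The Gray inner product of two vectors equals `T` of their `R₂` inner product. -/
lemma gray_inner_vec {n : ℕ} (x w : Fin n → R2) :
    ∑ p : Fin 4 × Fin n, grayMap x p * grayMap w p = Tf (∑ j, x j * w j) := by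
  rw [map_sum]
  rw [Fintype.sum_prod_type]
  rw [Finset.sum_comm]
  exact Finset.sum_congr rfl fun j _ => gray_inner (x j) (w j)

/-- If `C` is a self-dual code of length `n` over `R₂`, then its Gray
image `φ(C)` is a binary self-dual code of length `4n`. -/
theorem grayImage_selfDual {n : ℕ} (C : Submodule R2 (Fin n → R2))
    (hsd : (C : Set (Fin n → R2)) = dualSetR R2 (C : Set (Fin n → R2))) :
    grayMap '' (C : Set (Fin n → R2)) =
      dualSetR (ZMod 2) (grayMap '' (C : Set (Fin n → R2))) := by
  apply Set.eq_of_subset_of_subset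
  · rintro _ ⟨w, hw, rfl⟩
    rintro _ ⟨x, hx, rfl⟩
    have hwmem : w ∈ dualSetR R2 (C : Set (Fin n → R2)) := hsd ▸ hw
    have hxw : ∑ i, x i * w i = 0 := hwmem x hx
    rw [gray_inner_vec, hxw, map_zero]
  · intro y hy
    set w : Fin n → R2 := fun j => invCoord (fun i => y (i, j)) with hwdef
    have hyw : grayMap w = y := by
      funext p
      have := congrFun (grayCoord_invCoord (fun i => y (i, p.2))) p.1
      simpa [grayMap, hwdef] using this
    have key : ∀ r : R2, ∀ x, x ∈ C → Tf (r * ∑ i, x i * w i) = 0 := by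
      intro r x hx
      have hrx : r • x ∈ C := C.smul_mem r hx
      have h0 := hy (grayMap (r • x)) ⟨r • x, hrx, rfl⟩
      rw [← hyw, gray_inner_vec] at h0
      have : ∑ j, (r • x) j * w j = r * ∑ i, x i * w i := by
        rw [Finset.mul_sum]
        exact Finset.sum_congr rfl fun j _ => by
          simp [Pi.smul_apply, smul_eq_mul, mul_assoc]
      rwa [this] at h0
    have hwC : w ∈ dualSetR R2 (C : Set (Fin n → R2)) := by
      intro x hx
      apply nondeg
      · simpa using key 1 x hx
      · simpa [mul_assoc] using key uR2 x hx
      · simpa [mul_assoc] using key vR2 x hx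
      · simpa [mul_assoc] using key (uR2 * vR2) x hx
    rw [← hsd] at hwC
    exact ⟨w, hwC, hyw⟩
end

section
/- If c is a unit in R₂ with c² = 1, then for any self-dual code C of length n over R₂ generated by rows r₁,…,r_k and any X ∈ R₂ⁿ with ⟨X,X⟩ = 1, the code generated by the row (1, 0, X) together with the rows (yᵢ, c·yᵢ, rᵢ), where yᵢ = ⟨rᵢ, X⟩, is self-orthogonal of length n+2. -/
set_option synthInstance.maxHeartbeats 1000000
set_option maxHeartbeats 1000000

/-- Building-up construction over `R₂`, self-orthogonality: if `c` is a
unit in `R₂` with `c² = 1`, `C` is a self-dual code of length `n` over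
`R₂` generated by rows `r₁, …, r_k`, and `X ∈ R₂ⁿ` with `⟨X,X⟩ = 1`,
then the code generated by the row `(1,0,X)` and the rows
`(yᵢ, c·yᵢ, rᵢ)`, where `yᵢ = ⟨rᵢ,X⟩`, is self-orthogonal of length
`n+2`. -/
theorem buildUp_selfOrthogonal {n k : ℕ} (r : Fin k → Fin n → R2)
    (C : Submodule R2 (Fin n → R2))
    (hgen : C = Submodule.span R2 (Set.range r))
    (hsd : (C : Set (Fin n → R2)) = dualSetR R2 (C : Set (Fin n → R2)))
    (c : R2) (hc : IsUnit c) (hc2 : c * c = 1)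
    (X : Fin n → R2) (hX : ∑ i, X i * X i = 1) :
    ∀ w ∈ Submodule.span R2
        (insert (Fin.cons 1 (Fin.cons 0 X) : Fin (n + 2) → R2)
          (Set.range fun i => (Fin.cons (∑ t, r i t * X t)
            (Fin.cons (c * ∑ t, r i t * X t) (r i)) : Fin (n + 2) → R2))),
      ∀ z ∈ Submodule.span R2
        (insert (Fin.cons 1 (Fin.cons 0 X) : Fin (n + 2) → R2)
          (Set.range fun i => (Fin.cons (∑ t, r i t * X t)
            (Fin.cons (c * ∑ t, r i t * X t) (r i)) : Fin (n + 2) → R2))),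
        ∑ i, w i * z i = 0 := by
  intro w hw z hz
  have char2 : ∀ a : R2, a + a = 0 := fun a => by
    rw [← two_smul (ZMod 2) a, show (2 : ZMod 2) = 0 from rfl, zero_smul]
  have h2 : (2 : R2) = 0 := by
    rw [show (2 : R2) = 1 + 1 from (one_add_one_eq_two).symm]; exact char2 1
  have hcomm : ∀ (a b : Fin n → R2), ∑ t, a t * b t = ∑ t, b t * a t := by
    intro a b; exact Finset.sum_congr rfl fun t _ => by ring
  have hrC : ∀ i, r i ∈ C := fun i => by
    rw [hgen]; exact Submodule.subset_span ⟨i, rfl⟩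
  have hrr : ∀ i j, ∑ t, r i t * r j t = 0 := by
    intro i j
    have hj : r j ∈ dualSetR R2 (C : Set (Fin n → R2)) := by
      rw [← hsd]; exact hrC j
    exact hj (r i) (hrC i)
  induction hw, hz using Submodule.span_induction₂ with
  | mem_mem x y hx hy =>
    simp only [Set.mem_insert_iff, Set.mem_range] at hx hy
    rcases hx with rfl | ⟨i, rfl⟩ <;> rcases hy with rfl | ⟨j, rfl⟩
    · simp only [Fin.sum_univ_succ, Fin.cons_zero, Fin.cons_succ]
      rw [show ∑ t, X t * X t = 1 from hX]
      ring_nf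
      linear_combination h2
    · simp only [Fin.sum_univ_succ, Fin.cons_zero, Fin.cons_succ]
      rw [hcomm X (r j)]
      ring_nf
      linear_combination (∑ t, r j t * X t) * h2
    · simp only [Fin.sum_univ_succ, Fin.cons_zero, Fin.cons_succ]
      ring_nf
      linear_combination (∑ t, r i t * X t) * h2
    · simp only [Fin.sum_univ_succ, Fin.cons_zero, Fin.cons_succ]
      rw [hrr i j]
      linear_combination ((∑ t, r i t * X t) * (∑ t, r j t * X t)) * hc2 +
        ((∑ t, r i t * X t) * (∑ t, r j t * X t)) * h2
  | zero_left y hy => simp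
  | zero_right x hx => simp
  | add_left x y z hx hy hz h1 h2 =>
    simp only [Pi.add_apply, add_mul, Finset.sum_add_distrib, h1, h2, add_zero]
  | add_right x y z hx hy hz h1 h2 =>
    simp only [Pi.add_apply, mul_add, Finset.sum_add_distrib, h1, h2, add_zero]
  | smul_left a x y hx hy h1 =>
    have : ∑ i, (a • x) i * y i = a * ∑ i, x i * y i := by
      rw [Finset.mul_sum]
      exact Finset.sum_congr rfl fun i _ => by simp only [Pi.smul_apply, smul_eq_mul]; ring
    rw [this, h1, mul_zero]
  | smul_right a x y hx hy h1 =>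
    have : ∑ i, x i * (a • y) i = a * ∑ i, x i * y i := by
      rw [Finset.mul_sum]
      exact Finset.sum_congr rfl fun i _ => by simp only [Pi.smul_apply, smul_eq_mul]; ring
    rw [this, h1, mul_zero]
end

section
/- For the binary extension construction: if C ⊆ F₂ⁿ is self-dual with generating vectors r₁,…,r_k and X ∈ F₂ⁿ has odd weight (⟨X,X⟩ = 1), then the span of (1,0,X) and (yᵢ, yᵢ, rᵢ) with yᵢ = ⟨rᵢ,X⟩ is a self-dual code of length n+2 of dimension (n+2)/2. -/
/-- The dual (with respect to the standard inner product) of a set of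
vectors in `F₂ⁿ`. -/
def dualSet {n : ℕ} (C : Set (Fin n → ZMod 2)) : Set (Fin n → ZMod 2) :=
  {y | ∀ x ∈ C, ∑ i, x i * y i = 0}

/-- The binary code of length `n+2` of the building-up construction: the
span of the row `(1, 0, X)` together with the rows `(yᵢ, yᵢ, rᵢ)` where
`yᵢ = ⟨rᵢ, X⟩`. -/
def buildUpCode {n k : ℕ} (r : Fin k → Fin n → ZMod 2)
    (X : Fin n → ZMod 2) : Submodule (ZMod 2) (Fin (n + 2) → ZMod 2) :=
  Submodule.span (ZMod 2)
    (insert (Fin.cons 1 (Fin.cons 0 X))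
      (Set.range fun i =>
        Fin.cons (∑ t, r i t * X t)
          (Fin.cons (∑ t, r i t * X t) (r i))))

/-! The generators of the new code are pairwise orthogonal: `⟨(1,0,X),(1,0,X)⟩ = 1 + ⟨X,X⟩ = 0`
since `X` has odd weight, and in characteristic 2 the repeated coordinate `yᵢ` cancels the
remaining cross terms. So the code is self-orthogonal, hence of dimension at most `(n+2)/2`.
Deleting the first two coordinates maps it onto `C + ⟨X⟩`, of dimension `n/2 + 1` because
`X ∉ C = C⊥` (`⟨X,X⟩ ≠ 0`). So its dimension is exactly `(n+2)/2` and it equals its dual. -/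

open Module Matrix
open LinearMap (BilinForm)

section DotProduct

variable {K ι : Type*} [CommSemiring K] [Fintype ι]

lemma dotProductBilin_nondegenerate :
    (dotProductBilin K K : BilinForm K (ι → K)).Nondegenerate :=
  ⟨fun x hx => dotProduct_eq_zero x hx,
    fun y hy => dotProduct_eq_zero y fun x => (dotProduct_comm y x).trans (hy x)⟩

lemma LinearMap.BilinForm.span_le_orthogonal_span {V : Type*} [AddCommMonoid V] [Module K V]
    (B : BilinForm K V) {S : Set V} (hS : ∀ s ∈ S, ∀ t ∈ S, B s t = 0) :
    Submodule.span K S ≤ B.orthogonal (Submodule.span K S) := by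
  rw [Submodule.span_le]
  intro t ht
  rw [SetLike.mem_coe, BilinForm.mem_orthogonal_iff]
  exact Submodule.span_le (p := LinearMap.ker (B.flip t)) |>.2 (fun s hs => hS s hs t ht)

end DotProduct

lemma dualSet_eq_orthogonal {n : ℕ} (W : Submodule (ZMod 2) (Fin n → ZMod 2)) :
    dualSet (W : Set (Fin n → ZMod 2)) =
      (BilinForm.orthogonal (dotProductBilin (ZMod 2) (ZMod 2)) W : Set _) :=
  rfl

section Lagrangian

variable {K V : Type*} [Field K] [AddCommGroup V] [Module K V] [FiniteDimensional K V]
  {B : BilinForm K V} {W : Submodule K V}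

lemma LinearMap.BilinForm.finrank_add_finrank_of_eq_orthogonal (hB : B.Nondegenerate)
    (hW : W = B.orthogonal W) : finrank K W + finrank K W = finrank K V := by
  have h := B.finrank_orthogonal hB W
  rw [← hW] at h
  have := W.finrank_le
  omega

lemma LinearMap.BilinForm.eq_orthogonal_of_le_orthogonal (hB : B.Nondegenerate)
    (hW : W ≤ B.orthogonal W) (hdim : finrank K V ≤ finrank K W + finrank K W) :
    W = B.orthogonal W :=
  Submodule.eq_of_le_of_finrank_le hW (by rw [B.finrank_orthogonal hB]; omega)

end Lagrangian

lemma dotProduct_self_eq_hammingNorm {ι : Type*} [Fintype ι] (X : ι → ZMod 2) :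
    X ⬝ᵥ X = hammingNorm X := by
  have hsq : ∀ a : ZMod 2, a * a = if a ≠ 0 then 1 else 0 := by decide
  simp only [dotProduct, hsq, Finset.sum_boole, hammingNorm]

lemma dotProduct_cons_cons {R : Type*} [Mul R] [AddCommMonoid R] {m : ℕ} (a b : R)
    (f g : Fin m → R) :
    (Fin.cons a f : Fin (m + 1) → R) ⬝ᵥ Fin.cons b g = a * b + f ⬝ᵥ g :=
  cons_dotProduct_cons a f b g

section BuildUp

variable {n k : ℕ} (r : Fin k → Fin n → ZMod 2) (X : Fin n → ZMod 2)

lemma buildUpCode_le_orthogonal (hr : ∀ i j, r i ⬝ᵥ r j = 0) (hX : X ⬝ᵥ X = 1) :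
    buildUpCode r X ≤
      BilinForm.orthogonal (dotProductBilin (ZMod 2) (ZMod 2)) (buildUpCode r X) := by
  have hy (i : Fin k) : ∑ t, r i t * X t = r i ⬝ᵥ X := rfl
  apply BilinForm.span_le_orthogonal_span
  rintro _ (rfl | ⟨i, rfl⟩) _ (rfl | ⟨j, rfl⟩) <;>
    simp only [dotProductBilin_apply_apply, dotProduct_cons_cons, hy, hX, hr, dotProduct_comm X,
      one_mul, mul_one, zero_mul, mul_zero, zero_add, add_zero, CharTwo.add_self_eq_zero]

lemma map_buildUpCode :
    (buildUpCode r X).map (LinearMap.funLeft (ZMod 2) (ZMod 2) fun j : Fin n => j.succ.succ) =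
      Submodule.span (ZMod 2) (Set.range r) ⊔ Submodule.span (ZMod 2) {X} := by
  rw [buildUpCode, Submodule.map_span, Set.image_insert_eq, ← Set.range_comp,
    Submodule.span_insert, sup_comm]
  rfl

lemma finrank_span_range_add_one_le_finrank_buildUpCode
    (hX : X ∉ Submodule.span (ZMod 2) (Set.range r)) :
    finrank (ZMod 2) (Submodule.span (ZMod 2) (Set.range r)) + 1 ≤
      finrank (ZMod 2) (buildUpCode r X) := by
  rw [← Submodule.finrank_sup_span_singleton hX, ← map_buildUpCode]
  exact Submodule.finrank_map_le _ _

end BuildUp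

/-- Binary building-up construction: if `C ⊆ F₂ⁿ` is self-dual with
generating vectors `r₁, …, r_k` and `X ∈ F₂ⁿ` has odd weight
(`⟨X,X⟩ = 1`), then the span of `(1,0,X)` and the rows `(yᵢ, yᵢ, rᵢ)`
with `yᵢ = ⟨rᵢ,X⟩` is a self-dual code of length `n+2` of dimension
`(n+2)/2`. -/
theorem binary_buildUp_selfDual {n k : ℕ} (r : Fin k → Fin n → ZMod 2)
    (C : Submodule (ZMod 2) (Fin n → ZMod 2))
    (hgen : C = Submodule.span (ZMod 2) (Set.range r))
    (hsd : (C : Set (Fin n → ZMod 2)) = dualSet (C : Set (Fin n → ZMod 2)))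
    (X : Fin n → ZMod 2) (hX : Odd (hammingNorm X)) :
    (buildUpCode r X : Set (Fin (n + 2) → ZMod 2)) =
      dualSet (buildUpCode r X : Set (Fin (n + 2) → ZMod 2)) ∧
    Module.finrank (ZMod 2) (buildUpCode r X) = (n + 2) / 2 := by
  have hXX : X ⬝ᵥ X = 1 :=
    (dotProduct_self_eq_hammingNorm X).trans (ZMod.natCast_eq_one_iff_odd.2 hX)
  have hC : C = BilinForm.orthogonal (dotProductBilin (ZMod 2) (ZMod 2)) C :=
    SetLike.coe_injective (hsd.trans (dualSet_eq_orthogonal C))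
  have hXC : X ∉ C := fun h => one_ne_zero (hXX.symm.trans (hC.le h X h))
  have hCdim := BilinForm.finrank_add_finrank_of_eq_orthogonal dotProductBilin_nondegenerate hC
  rw [finrank_fin_fun] at hCdim
  subst hgen
  have hiso := buildUpCode_le_orthogonal r X
    (fun i j => hC.le (Submodule.subset_span ⟨j, rfl⟩) _ (Submodule.subset_span ⟨i, rfl⟩)) hXX
  have hDlower := finrank_span_range_add_one_le_finrank_buildUpCode r X hXC
  have hD := BilinForm.eq_orthogonal_of_le_orthogonal dotProductBilin_nondegenerate hiso
    (by rw [finrank_fin_fun]; omega)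
  have hDhalf := BilinForm.finrank_add_finrank_of_eq_orthogonal dotProductBilin_nondegenerate hD
  rw [finrank_fin_fun] at hDhalf
  exact ⟨(congrArg _ hD).trans (dualSet_eq_orthogonal _).symm, by omega⟩
end

section
/- The binary code of length 16 generated by [I₈ | A₂], where A₂ is the given 8×8 matrix, is a self-dual Type I (singly-even, i.e., not doubly-even) code with minimum distance 4 and weight distribution 1 + 12z⁴ + 64z⁶ + 102z⁸ + 64z¹⁰ + 12z¹² + z¹⁶. -/
/-- The matrix `A₂` obtained from the face-vertex incidence matrix of the
graph `G₂`. -/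
def A2 : Fin 8 → Fin 8 → ZMod 2 :=
  ![![1, 0, 0, 1, 1, 1, 1, 0],
    ![0, 1, 0, 1, 1, 1, 1, 0],
    ![0, 0, 1, 1, 1, 1, 1, 0],
    ![0, 0, 0, 1, 0, 0, 1, 1],
    ![0, 0, 0, 0, 1, 0, 1, 1],
    ![0, 0, 0, 0, 0, 1, 1, 1],
    ![1, 1, 1, 1, 1, 1, 0, 1],
    ![1, 1, 1, 0, 0, 0, 1, 1]]

/-- The rows of the matrix `[I₈ | A₂]`. -/
def G2rows : Fin 8 → Fin 16 → ZMod 2 :=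
  fun i => Fin.append (fun j : Fin 8 => if i = j then 1 else 0) (A2 i)

/-- The binary code `D` of length `16` generated by `[I₈ | A₂]`. -/
def D2 : Submodule (ZMod 2) (Fin 16 → ZMod 2) :=
  Submodule.span (ZMod 2) (Set.range G2rows)

/-!
Over any commutative ring, the code spanned by the rows of `[1 | A]` equals its orthogonal
complement as soon as `A Aᵀ = -1`: the rows are then pairwise orthogonal, and a vector `(u, v)`
orthogonal to every row has `u = -A v`, hence `u A = -Aᵀ A v = v`, so it is the codeword
encoding `u`. Over `F₂` the condition reads `A₂ A₂ᵀ = 1`, a finite computation. The encoding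
`c ↦ (c, c A₂)` is a bijection from `F₂⁸` onto the code, so the code has `2⁸` words and its weight
distribution is obtained by enumerating the `256` messages; the minimum distance and the
existence of words of weight `6` (Type I) are read off from the distribution.
-/

open Matrix Function

lemma Fin.append_dotProduct_append {α : Type*} [Mul α] [AddCommMonoid α] {m k : ℕ}
    (u u' : Fin m → α) (v v' : Fin k → α) :
    Fin.append u v ⬝ᵥ Fin.append u' v' = u ⬝ᵥ u' + v ⬝ᵥ v' := by
  simp [dotProduct, Fin.sum_univ_add]

lemma Nat.card_mem_range_and {α β : Type*} {f : α → β} (hf : Injective f) (P : β → Prop) :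
    Nat.card {x // x ∈ Set.range f ∧ P x} = Nat.card {a // P (f a)} := by
  refine Nat.card_congr (Equiv.ofBijective (fun a => ⟨f a, Set.mem_range_self a.1, a.2⟩)
    ⟨?_, ?_⟩).symm
  · exact fun a b h => Subtype.ext (hf (congrArg Subtype.val h))
  · rintro ⟨_, ⟨a, rfl⟩, h⟩
    exact ⟨⟨a, h⟩, rfl⟩

section Systematic

variable {R : Type*} {n : ℕ}

section Semiring

variable [Semiring R] (A : Matrix (Fin n) (Fin n) R)

def systematicRow (i : Fin n) : Fin (n + n) → R :=
  Fin.append ((1 : Matrix (Fin n) (Fin n) R) i) (A i)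

def systematicEncode (c : Fin n → R) : Fin (n + n) → R :=
  Fin.append c (c ᵥ* A)

lemma systematicRow_dotProduct (i : Fin n) (u v : Fin n → R) :
    systematicRow A i ⬝ᵥ Fin.append u v = u i + (A *ᵥ v) i := by
  rw [systematicRow, Fin.append_dotProduct_append, ← mulVec, one_mulVec]
  rfl

lemma sum_smul_systematicRow (c : Fin n → R) :
    ∑ i, c i • systematicRow A i = systematicEncode A c := by
  ext k
  induction k using Fin.addCases <;>
    simp only [Finset.sum_apply, Pi.smul_apply, smul_eq_mul, systematicRow, systematicEncode,
      Fin.append_left, Fin.append_right]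
  · simp [one_apply]
  · rfl

lemma coe_span_systematicRow :
    (Submodule.span R (Set.range (systematicRow A)) : Set (Fin (n + n) → R)) =
      Set.range (systematicEncode A) := by
  ext x
  simp [Submodule.mem_span_range_iff_exists_fun, sum_smul_systematicRow]

lemma systematicEncode_injective : Injective (systematicEncode A) := by
  intro a b h
  ext i
  simpa [systematicEncode] using congrFun h (Fin.castAdd n i)

lemma Nat.card_span_systematicRow :
    Nat.card (Submodule.span R (Set.range (systematicRow A))) = Nat.card (Fin n → R) := by
  rw [← SetLike.coe_sort_coe, coe_span_systematicRow,
    Nat.card_range_of_injective (systematicEncode_injective A)]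

end Semiring

variable [CommRing R] {A : Matrix (Fin n) (Fin n) R}

lemma systematicEncode_dotProduct (hA : A * Aᵀ = -1) (a b : Fin n → R) :
    systematicEncode A a ⬝ᵥ systematicEncode A b = 0 := by
  have hright : (a ᵥ* A) ⬝ᵥ (b ᵥ* A) = -(a ⬝ᵥ b) := by
    rw [← dotProduct_mulVec, ← mulVec_transpose, mulVec_mulVec, hA, neg_mulVec, one_mulVec,
      dotProduct_neg]
  rw [systematicEncode, systematicEncode, Fin.append_dotProduct_append, hright, add_neg_cancel]

lemma coe_span_systematicRow_eq_orthogonal (hA : A * Aᵀ = -1) :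
    (Submodule.span R (Set.range (systematicRow A)) : Set (Fin (n + n) → R)) =
      {y | ∀ x ∈ Submodule.span R (Set.range (systematicRow A)), x ⬝ᵥ y = 0} := by
  have hA' : Aᵀ * A = -1 := by
    rw [← neg_eq_iff_eq_neg, ← neg_mul, mul_eq_one_comm, mul_neg, hA, neg_neg]
  apply Set.Subset.antisymm
  · rw [coe_span_systematicRow]
    rintro _ ⟨b, rfl⟩
    simp only [← SetLike.mem_coe, coe_span_systematicRow, Set.forall_mem_range]
    exact fun a => systematicEncode_dotProduct hA a b
  · intro y hy
    rw [← Fin.append_castAdd_natAdd (f := y)] at hy ⊢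
    set u := fun i => y (Fin.castAdd n i)
    set v := fun i => y (Fin.natAdd n i)
    have hu : u = -(A *ᵥ v) := by
      ext i
      rw [Pi.neg_apply, eq_neg_iff_add_eq_zero, ← systematicRow_dotProduct]
      exact hy _ (Submodule.subset_span ⟨i, rfl⟩)
    have hv : u ᵥ* A = v := by
      rw [hu, neg_vecMul, ← mulVec_transpose, mulVec_mulVec, hA', neg_mulVec, one_mulVec, neg_neg]
    rw [coe_span_systematicRow]
    exact ⟨u, by rw [systematicEncode, hv]⟩

end Systematic

section WeightCount

variable {ι β : Type*} [Fintype ι] [Zero β] [DecidableEq β]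

noncomputable def weightCount (C : Set (ι → β)) (w : ℕ) : ℕ :=
  Nat.card {x // x ∈ C ∧ hammingNorm x = w}

lemma exists_hammingNorm_eq_of_weightCount_pos {C : Set (ι → β)} {w : ℕ}
    (h : 0 < weightCount C w) : ∃ x ∈ C, hammingNorm x = w := by
  obtain ⟨⟨x, hx, hw⟩⟩ := (Nat.card_pos_iff.1 h).1
  exact ⟨x, hx, hw⟩

lemma le_hammingNorm_of_weightCount_eq_zero [Finite β] {C : Set (ι → β)} {d : ℕ}
    (h : ∀ w, 0 < w → w < d → weightCount C w = 0) {x : ι → β} (hx : x ∈ C) (hx0 : x ≠ 0) :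
    d ≤ hammingNorm x := by
  by_contra! hlt
  have : Nonempty {y // y ∈ C ∧ hammingNorm y = hammingNorm x} := ⟨⟨x, hx, rfl⟩⟩
  have hzero := h _ (hammingNorm_pos_iff.2 hx0) hlt
  exact Nat.card_pos.ne' hzero

end WeightCount

lemma D2_eq_span_systematicRow :
    D2 = Submodule.span (ZMod 2) (Set.range (systematicRow (of A2))) :=
  rfl

lemma A2_mul_transpose : of A2 * (of A2)ᵀ = -1 := by
  decide

lemma card_hammingNorm_systematicEncode_A2 (w : Fin 17) :
    Fintype.card {c // hammingNorm (systematicEncode (of A2) c) = w} =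
      ![1, 0, 0, 0, 12, 0, 64, 0, 102, 0, 64, 0, 12, 0, 0, 0, 1] w := by
  revert w
  decide

lemma weightCount_D2 (w : Fin 17) :
    weightCount (D2 : Set (Fin 16 → ZMod 2)) w =
      ![1, 0, 0, 0, 12, 0, 64, 0, 102, 0, 64, 0, 12, 0, 0, 0, 1] w := by
  rw [weightCount, D2_eq_span_systematicRow, coe_span_systematicRow (of A2),
    Nat.card_mem_range_and (systematicEncode_injective (of A2)), Nat.card_eq_fintype_card,
    card_hammingNorm_systematicEncode_A2]

lemma card_D2 : Nat.card D2 = 256 := by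
  rw [D2_eq_span_systematicRow, Nat.card_span_systematicRow (of A2), Nat.card_fun]
  simp

/-- The binary code of length `16` generated by `[I₈ | A₂]` is a
self-dual Type I (singly-even, not doubly-even) code with minimum
distance `4` and weight distribution
`1 + 12z⁴ + 64z⁶ + 102z⁸ + 64z¹⁰ + 12z¹² + z¹⁶`. -/
theorem D2_selfDual_typeI_weightDistribution :
    ((D2 : Set (Fin 16 → ZMod 2)) = dualSet (D2 : Set (Fin 16 → ZMod 2))) ∧
    (∃ x ∈ D2, ¬ 4 ∣ hammingNorm x) ∧
    (∀ x ∈ D2, x ≠ 0 → 4 ≤ hammingNorm x) ∧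
    (∃ x ∈ D2, x ≠ 0 ∧ hammingNorm x = 4) ∧
    Nat.card D2 = 256 ∧
    Nat.card {x : Fin 16 → ZMod 2 // x ∈ D2 ∧ hammingNorm x = 0} = 1 ∧
    Nat.card {x : Fin 16 → ZMod 2 // x ∈ D2 ∧ hammingNorm x = 4} = 12 ∧
    Nat.card {x : Fin 16 → ZMod 2 // x ∈ D2 ∧ hammingNorm x = 6} = 64 ∧
    Nat.card {x : Fin 16 → ZMod 2 // x ∈ D2 ∧ hammingNorm x = 8} = 102 ∧
    Nat.card {x : Fin 16 → ZMod 2 // x ∈ D2 ∧ hammingNorm x = 10} = 64 ∧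
    Nat.card {x : Fin 16 → ZMod 2 // x ∈ D2 ∧ hammingNorm x = 12} = 12 ∧
    Nat.card {x : Fin 16 → ZMod 2 // x ∈ D2 ∧ hammingNorm x = 16} = 1 := by
  have hdist := weightCount_D2
  refine ⟨?_, ?_, fun x hx hx0 => ?_, ?_, card_D2,
    hdist 0, hdist 4, hdist 6, hdist 8, hdist 10, hdist 12, hdist 16⟩
  · rw [D2_eq_span_systematicRow]
    exact coe_span_systematicRow_eq_orthogonal A2_mul_transpose
  · obtain ⟨x, hx, h6⟩ := exists_hammingNorm_eq_of_weightCount_pos ((hdist 6).trans_gt (by decide))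
    exact ⟨x, hx, by rw [h6]; decide⟩
  · refine le_hammingNorm_of_weightCount_eq_zero (fun w hw0 hw4 => ?_) hx hx0
    interval_cases w
    exacts [hdist 1, hdist 2, hdist 3]
  · obtain ⟨x, hx, h4⟩ := exists_hammingNorm_eq_of_weightCount_pos ((hdist 4).trans_gt (by decide))
    exact ⟨x, hx, fun h0 => by simp [h0] at h4, h4⟩
end
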